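/- The C-bound: If E[M] > 0, where M = y·H(x) is the margin random variable of a majority vote, then the risk P(M ≤ 0) is at most 1 − (E[M])² / E[M²]. -/

import Mathlib

/-!
Cauchy–Schwarz against the indicator of `{M > 0}`: since `M ≤ M · 1_{M > 0}` pointwise,
`E[M] ≤ E[M · 1_{M > 0}] ≤ √(E[M²]) · √(P(M > 0))`, and squaring (with `E[M] ≥ 0`) gives
`P(M > 0) ≥ E[M]² / E[M²]`.
-/

open MeasureTheory

namespace MeasureTheory

variable {α : Type*} [MeasurableSpace α] {μ : Measure α}

theorem sq_integral_mul_le_integral_sq_mul_integral_sq {f g : α → ℝ}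
    (hf : MemLp f 2 μ) (hg : MemLp g 2 μ) :
    (∫ x, f x * g x ∂μ) ^ 2 ≤ (∫ x, f x ^ 2 ∂μ) * ∫ x, g x ^ 2 ∂μ := by
  have inner_toLp : ∀ {u v : α → ℝ} (hu : MemLp u 2 μ) (hv : MemLp v 2 μ),
      inner ℝ (hu.toLp u) (hv.toLp v) = ∫ x, u x * v x ∂μ := by
    intro u v hu hv
    rw [L2.inner_def]
    refine integral_congr_ae ?_
    filter_upwards [hu.coeFn_toLp, hv.coeFn_toLp] with x hux hvx
    simp [hux, hvx, mul_comm]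
  have h := real_inner_mul_inner_self_le (hf.toLp f) (hg.toLp g)
  simpa only [inner_toLp, ← sq] using h

theorem sq_integral_le_measureReal_univ_mul_integral_sq [IsFiniteMeasure μ] {f : α → ℝ}
    (hf : MemLp f 2 μ) :
    (∫ x, f x ∂μ) ^ 2 ≤ μ.real Set.univ * ∫ x, f x ^ 2 ∂μ := by
  simpa [mul_comm] using sq_integral_mul_le_integral_sq_mul_integral_sq hf (memLp_const 1)

theorem integral_le_setIntegral_pos {f : α → ℝ} (hf : Integrable f μ) :
    ∫ x, f x ∂μ ≤ ∫ x in {x | 0 < f x}, f x ∂μ := by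
  have hs : NullMeasurableSet {x | 0 < f x} μ :=
    aestronglyMeasurable_const.nullMeasurableSet_lt hf.aestronglyMeasurable
  have hcompl : ∫ x in {x | 0 < f x}ᶜ, f x ∂μ ≤ 0 := by
    refine setIntegral_nonpos_of_ae_restrict ?_
    filter_upwards [ae_restrict_mem₀ hs.compl] with x hx
    simpa using hx
  linarith [integral_add_compl₀ hs hf]

theorem sq_integral_le_measureReal_pos_mul_integral_sq [IsFiniteMeasure μ] {f : α → ℝ}
    (hf : MemLp f 2 μ) (h0 : 0 ≤ ∫ x, f x ∂μ) :
    (∫ x, f x ∂μ) ^ 2 ≤ μ.real {x | 0 < f x} * ∫ x, f x ^ 2 ∂μ := by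
  set A := {x | 0 < f x}
  calc (∫ x, f x ∂μ) ^ 2 ≤ (∫ x in A, f x ∂μ) ^ 2 :=
        pow_le_pow_left₀ h0 (integral_le_setIntegral_pos (hf.integrable one_le_two)) 2
    _ ≤ μ.real A * ∫ x in A, f x ^ 2 ∂μ := by
        simpa using sq_integral_le_measureReal_univ_mul_integral_sq (hf.restrict A)
    _ ≤ μ.real A * ∫ x, f x ^ 2 ∂μ :=
        mul_le_mul_of_nonneg_left
          (setIntegral_le_integral hf.integrable_sq (ae_of_all _ fun x => sq_nonneg _))
          measureReal_nonneg

theorem measureReal_nonpos_le_one_sub_sq_integral_div [IsProbabilityMeasure μ] {f : α → ℝ}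
    (hf : MemLp f 2 μ) (h0 : 0 ≤ ∫ x, f x ∂μ) :
    μ.real {x | f x ≤ 0} ≤ 1 - (∫ x, f x ∂μ) ^ 2 / ∫ x, f x ^ 2 ∂μ := by
  have hs : NullMeasurableSet {x | 0 < f x} μ :=
    aestronglyMeasurable_const.nullMeasurableSet_lt hf.aestronglyMeasurable
  have hcompl : {x | f x ≤ 0} = {x | 0 < f x}ᶜ := by
    ext x; simp
  have hbound : (∫ x, f x ∂μ) ^ 2 / ∫ x, f x ^ 2 ∂μ ≤ μ.real {x | 0 < f x} :=
    div_le_of_le_mul₀ (integral_nonneg fun x => sq_nonneg _) measureReal_nonneg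
      (sq_integral_le_measureReal_pos_mul_integral_sq hf h0)
  rw [hcompl, measureReal_compl₀ hs, probReal_univ]
  linarith

end MeasureTheory

theorem c_bound_general
    {X : Type*} [MeasurableSpace X] (D : Measure (X × ℝ)) [IsProbabilityMeasure D]
    (M : X × ℝ → ℝ)
    (hL2 : MemLp M 2 D)
    (hpos : 0 < ∫ p, M p ∂D) :
    (D {p | M p ≤ 0}).toReal ≤ 1 - (∫ p, M p ∂D) ^ 2 / ∫ p, (M p) ^ 2 ∂D :=
  measureReal_nonpos_le_one_sub_sq_integral_div hL2 hpos.le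

/-- The C-bound: let `D` be a probability distribution over `X × {-1,1}` and
`M(x,y) = y·H(x)` the margin of the vote `sign ∘ H`. If `E[M] > 0` (with
`M` of finite, positive second moment), then the risk `P(M ≤ 0)` is at most
`1 - (E[M])²/E[M²]`. -/
theorem c_bound
    {X : Type*} [MeasurableSpace X] (D : Measure (X × ℝ)) [IsProbabilityMeasure D]
    (hlabel : ∀ᵐ p ∂D, p.2 = 1 ∨ p.2 = -1)
    (H : X → ℝ) (hH : Measurable H)
    (M : X × ℝ → ℝ) (hM : M = fun p => p.2 * H p.1)
    (hL2 : MemLp M 2 D)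
    (hpos : 0 < ∫ p, M p ∂D) (hpos2 : 0 < ∫ p, (M p) ^ 2 ∂D) :
    (D {p | M p ≤ 0}).toReal ≤ 1 - (∫ p, M p ∂D) ^ 2 / ∫ p, (M p) ^ 2 ∂D :=
  c_bound_general D M hL2 hpos
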